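/- For any Q ≥ 2 and any fraction γ_i in F_Q, ν_4(γ_i) = ν_2(γ_i)·ν_2(γ_{i+1})·ν_2(γ_{i+2}) − ν_2(γ_i) − ν_2(γ_{i+2}). -/

import Mathlib

open MeasureTheory

/-- The Farey fractions of order `Q`, as a set of rationals in `(0,1]`
with denominator at most `Q` (rationals are automatically in lowest terms). -/
def fareySet (Q : ℕ) : Set ℚ := {x | 0 < x ∧ x ≤ 1 ∧ x.den ≤ Q}

/-- `IsFarey Q N p q` asserts that `i ↦ p i / q i` (for `1 ≤ i ≤ N`) enumerates the
Farey fractions of order `Q` in increasing order, in lowest terms, extended to all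
integer indices by the periodicity `γ_{i+N} = γ_i + 1`. -/
structure IsFarey (Q N : ℕ) (p q : ℤ → ℤ) : Prop where
  qpos : ∀ i : ℤ, 0 < q i
  coprime : ∀ i : ℤ, Int.gcd (p i) (q i) = 1
  mono : ∀ i j : ℤ, i < j → (p i : ℚ) / (q i) < (p j : ℚ) / (q j)
  mem : ∀ i : ℤ, 1 ≤ i → i ≤ (N : ℤ) → ((p i : ℚ) / (q i)) ∈ fareySet Q
  surj : ∀ x ∈ fareySet Q, ∃ i : ℤ, 1 ≤ i ∧ i ≤ (N : ℤ) ∧ (p i : ℚ) / (q i) = x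
  period_p : ∀ i : ℤ, p (i + N) = p i + q i
  period_q : ∀ i : ℤ, q (i + N) = q i

/-- The `k`-index `ν_k(γ_i) = p_{i+k-1} q_{i-1} - p_{i-1} q_{i+k-1}`. -/
def nuk (p q : ℤ → ℤ) (k : ℕ) (i : ℤ) : ℤ :=
  p (i + k - 1) * q (i - 1) - p (i - 1) * q (i + k - 1)

/-! Consecutive Farey fractions `a/b < c/d` satisfy `bc - ad = 1`; this persists across the period,
since the periodic extension enumerates, in increasing order, all rationals of denominator at most
`Q`. So consecutive vectors `(pⱼ, qⱼ)` have determinant one, and the identity for `ν₄` follows from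
the Plücker relations among the `2 × 2` minors of five such vectors. -/

theorem exists_mul_sub_mul_eq_one_of_isCoprime {a b : ℤ} (hab : IsCoprime a b) (hb : 0 < b)
    (Q : ℤ) : ∃ x y : ℤ, b * x - a * y = 1 ∧ Q - b < y ∧ y ≤ Q := by
  obtain ⟨s, t, hst⟩ := hab
  refine ⟨t + a * ((Q + s) / b), Q - (Q + s) % b, ?_, ?_, ?_⟩
  · rw [Int.emod_def]
    linear_combination hst
  · linarith [Int.emod_lt_of_pos (Q + s) hb]
  · linarith [Int.emod_nonneg (Q + s) hb.ne']

/- If `r = a/b`, take `x/y` with `bx - ay = 1` and `Q - b < y ≤ Q`. Were the successor `s = c/d`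
strictly below `x/y`, then `d = d(bx - ay) = b(xd - cy) + y(cb - ad) ≥ b + y > Q`. -/
theorem num_mul_den_sub_num_mul_den_eq_one_of_succ {Q : ℕ} {r s : ℚ} (hr : r.den ≤ Q)
    (hs : s.den ≤ Q) (hrs : r < s) (hsucc : ∀ t : ℚ, t.den ≤ Q → r < t → s ≤ t) :
    s.num * r.den - r.num * s.den = 1 := by
  obtain ⟨x, y, hxy, hyQ, hy⟩ :=
    exists_mul_sub_mul_eq_one_of_isCoprime r.isCoprime_num_den (by positivity) Q
  have hy0 : 0 < y := by omega
  have hcop : Int.gcd x y = 1 :=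
    Int.isCoprime_iff_gcd_eq_one.mp ⟨r.den, -r.num, by linear_combination hxy⟩
  set t : ℚ := x / y
  have ht_num : t.num = x := Rat.num_div_eq_of_coprime hy0 hcop
  have ht_den : (t.den : ℤ) = y := Rat.den_div_eq_of_coprime hy0 hcop
  have hrt : r < t := by
    rw [Rat.lt_iff, ht_num, ht_den]
    linarith
  have hst : s ≤ t := hsucc t (by omega) hrt
  have hts : t ≤ s := by
    by_contra! hlt
    rw [Rat.lt_iff, ht_num, ht_den] at hlt
    rw [Rat.lt_iff] at hrs
    have hsplit : (s.den : ℤ) =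
        r.den * (x * s.den - s.num * y) + y * (s.num * r.den - r.num * s.den) := by
      linear_combination -(s.den : ℤ) * hxy
    nlinarith
  rw [le_antisymm hst hts, ht_num, ht_den]
  linear_combination hxy

/- Write `Dₖₗ = aₗ bₖ - aₖ bₗ`. The Plücker relations `D₀₁ D₂₄ - D₀₂ D₁₄ + D₀₄ D₁₂ = 0` and
`D₁₂ D₃₄ - D₁₃ D₂₄ + D₁₄ D₂₃ = 0` give `D₀₄ = D₀₂ D₁₄ - D₂₄` and `D₁₄ = D₁₃ D₂₄ - 1`. -/
theorem det_zero_four_of_consecutive_det_one {R : Type*} [CommRing R]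
    (a₀ a₁ a₂ a₃ a₄ b₀ b₁ b₂ b₃ b₄ : R)
    (h₀₁ : a₁ * b₀ - a₀ * b₁ = 1) (h₁₂ : a₂ * b₁ - a₁ * b₂ = 1)
    (h₂₃ : a₃ * b₂ - a₂ * b₃ = 1) (h₃₄ : a₄ * b₃ - a₃ * b₄ = 1) :
    a₄ * b₀ - a₀ * b₄ = (a₂ * b₀ - a₀ * b₂) * (a₃ * b₁ - a₁ * b₃) * (a₄ * b₂ - a₂ * b₄)
      - (a₂ * b₀ - a₀ * b₂) - (a₄ * b₂ - a₂ * b₄) := by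
  linear_combination (-(a₄ * b₀ - a₀ * b₄) - (a₂ * b₀ - a₀ * b₂)) * h₁₂
    - (a₄ * b₂ - a₂ * b₄) * h₀₁ - (a₂ * b₀ - a₀ * b₂) * (a₄ * b₁ - a₁ * b₄) * h₂₃
    - (a₂ * b₀ - a₀ * b₂) * (a₂ * b₁ - a₁ * b₂) * h₃₄

theorem Int.exists_eq_add_mul_of_pos {n : ℤ} (hn : 0 < n) (j : ℤ) :
    ∃ k m : ℤ, 1 ≤ k ∧ k ≤ n ∧ j = k + m * n :=
  ⟨(j - 1) % n + 1, (j - 1) / n, by linarith [Int.emod_nonneg (j - 1) hn.ne'],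
    by linarith [Int.emod_lt_of_pos (j - 1) hn], by linarith [Int.emod_add_mul_ediv (j - 1) n]⟩

namespace IsFarey

variable {Q N : ℕ} {p q : ℤ → ℤ}

theorem period_pos (hF : IsFarey Q N p q) : 0 < N :=
  Nat.pos_of_ne_zero fun hN => (hF.qpos 0).ne' (by simpa [hN] using hF.period_p 0)

theorem strictMono (hF : IsFarey Q N p q) : StrictMono fun i => (p i : ℚ) / q i :=
  fun i j hij => hF.mono i j hij

theorem num_div (hF : IsFarey Q N p q) (i : ℤ) : ((p i : ℚ) / q i).num = p i :=
  Rat.num_div_eq_of_coprime (hF.qpos i) (hF.coprime i)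

theorem den_div (hF : IsFarey Q N p q) (i : ℤ) : (((p i : ℚ) / q i).den : ℤ) = q i :=
  Rat.den_div_eq_of_coprime (hF.qpos i) (hF.coprime i)

theorem div_add_period (hF : IsFarey Q N p q) (i : ℤ) :
    (p (i + N) : ℚ) / q (i + N) = p i / q i + 1 := by
  have hq : (q i : ℚ) ≠ 0 := by exact_mod_cast (hF.qpos i).ne'
  rw [hF.period_p, hF.period_q, Int.cast_add, add_div, div_self hq]

theorem q_add_mul_period (hF : IsFarey Q N p q) (i m : ℤ) : q (i + m * N) = q i := by
  induction m using Int.induction_on with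
  | zero => simp
  | succ m ih => rw [add_one_mul, ← add_assoc, hF.period_q, ih]
  | pred m ih => rw [← ih, sub_one_mul, ← hF.period_q]; ring_nf

theorem div_add_mul_period (hF : IsFarey Q N p q) (i m : ℤ) :
    (p (i + m * N) : ℚ) / q (i + m * N) = p i / q i + m := by
  induction m using Int.induction_on with
  | zero => simp
  | succ m ih => rw [add_one_mul, ← add_assoc, hF.div_add_period, ih]; push_cast; ring
  | pred m ih =>
    have h := hF.div_add_period (i + (-m - 1) * N)
    rw [show i + (-m - 1) * N + N = i + -m * N by ring, ih] at h
    push_cast at h ⊢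
    linarith

theorem den_div_le (hF : IsFarey Q N p q) (j : ℤ) : ((p j : ℚ) / q j).den ≤ Q := by
  obtain ⟨k, m, hk1, hkN, rfl⟩ :=
    Int.exists_eq_add_mul_of_pos (Int.natCast_pos.mpr hF.period_pos) j
  have h := ((hF.den_div _).trans (hF.q_add_mul_period k m)).trans (hF.den_div k).symm
  rw [Nat.cast_inj.mp h]
  exact (hF.mem k hk1 hkN).2.2

theorem exists_div_eq (hF : IsFarey Q N p q) {t : ℚ} (ht : t.den ≤ Q) :
    ∃ k : ℤ, (p k : ℚ) / q k = t := by
  set m : ℤ := ⌈t⌉ - 1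
  have hmem : t - m ∈ fareySet Q := by
    refine ⟨?_, ?_, by rwa [Rat.sub_intCast_den]⟩
    · have := Int.ceil_lt_add_one t
      push_cast [m]
      linarith
    · have := Int.le_ceil t
      push_cast [m]
      linarith
  obtain ⟨k, -, -, hk⟩ := hF.surj _ hmem
  exact ⟨k + m * N, by rw [hF.div_add_mul_period, hk, sub_add_cancel]⟩

theorem div_succ_le (hF : IsFarey Q N p q) (j : ℤ) {t : ℚ} (ht : t.den ≤ Q)
    (hjt : (p j : ℚ) / q j < t) : (p (j + 1) : ℚ) / q (j + 1) ≤ t := by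
  obtain ⟨k, rfl⟩ := hF.exists_div_eq ht
  exact hF.strictMono.monotone (hF.strictMono.lt_iff_lt.mp hjt)

theorem succ_mul_sub_mul_succ (hF : IsFarey Q N p q) (j : ℤ) :
    p (j + 1) * q j - p j * q (j + 1) = 1 := by
  have h := num_mul_den_sub_num_mul_den_eq_one_of_succ (hF.den_div_le j) (hF.den_div_le (j + 1))
    (hF.strictMono (lt_add_one j)) fun _ ht hjt => hF.div_succ_le j ht hjt
  rwa [hF.num_div, hF.num_div, hF.den_div, hF.den_div] at h

end IsFarey

theorem nu4_identity_general (Q N : ℕ) (p q : ℤ → ℤ)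
    (hF : IsFarey Q N p q) (i : ℤ) :
    nuk p q 4 i = nuk p q 2 i * nuk p q 2 (i + 1) * nuk p q 2 (i + 2)
      - nuk p q 2 i - nuk p q 2 (i + 2) := by
  have h₀ : p i * q (i - 1) - p (i - 1) * q i = 1 := by
    simpa using hF.succ_mul_sub_mul_succ (i - 1)
  have h₂ : p (i + 2) * q (i + 1) - p (i + 1) * q (i + 2) = 1 := by
    simpa [add_assoc] using hF.succ_mul_sub_mul_succ (i + 1)
  have h₃ : p (i + 3) * q (i + 2) - p (i + 2) * q (i + 3) = 1 := by
    simpa [add_assoc] using hF.succ_mul_sub_mul_succ (i + 2)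
  simp only [nuk, Nat.cast_ofNat, add_sub_cancel_right, show i + 4 - 1 = i + 3 by ring,
    show i + 1 + 2 - 1 = i + 2 by ring, show i + 2 + 2 - 1 = i + 3 by ring,
    show i + 2 - 1 = i + 1 by ring]
  exact det_zero_four_of_consecutive_det_one _ _ _ _ _ _ _ _ _ _
    h₀ (hF.succ_mul_sub_mul_succ i) h₂ h₃

/-- `ν_4(γ_i) = ν_2(γ_i) ν_2(γ_{i+1}) ν_2(γ_{i+2}) - ν_2(γ_i) - ν_2(γ_{i+2})`. -/
theorem nu4_identity (Q N : ℕ) (p q : ℤ → ℤ) (hQ : 2 ≤ Q)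
    (hF : IsFarey Q N p q) (i : ℤ) (h1 : 1 ≤ i) (h2 : i ≤ (N : ℤ)) :
    nuk p q 4 i = nuk p q 2 i * nuk p q 2 (i + 1) * nuk p q 2 (i + 2)
      - nuk p q 2 i - nuk p q 2 (i + 2) :=
  nu4_identity_general Q N p q hF i
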